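/- arXiv:0906.0560 — 3 statements merged into one kernel-verified Lean document; each statement's English description precedes it below -/
import Mathlib

section
/- Let n be a natural number and let V = ℝⁿ with its standard inner product ⟨·,·⟩. Suppose f : V → (V →ₗ V) is a linear map such that for every v ∈ V the endomorphism f(v) is skew-adjoint (⟨f(v)(w), u⟩ = −⟨w, f(v)(u)⟩ for all w, u ∈ V) and such that f(v₁)(v₂) = f(v₂)(v₁) for all v₁, v₂ ∈ V. Then f = 0. -/
open scoped RealInnerProductSpace

/-! A trilinear form symmetric in its first two arguments and skew in its last two vanishes:
alternately swapping the first and the last pair of arguments six times returns to the start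
with a sign `-1`. Applied to `(x, y, z) ↦ ⟪f x y, z⟫` this shows that `f x y` is orthogonal
to everything. -/

theorem eq_zero_of_symm_of_antisymm {α G : Type*} [AddGroup G] [IsAddTorsionFree G]
    (T : α → α → α → G) (hsymm : ∀ x y z, T x y z = T y x z)
    (hanti : ∀ x y z, T x y z = -T x z y) (x y z : α) : T x y z = 0 :=
  self_eq_neg.mp <| calc
    T x y z = T y x z := hsymm x y z
    _ = -T y z x := hanti y x z
    _ = -T z y x := by rw [hsymm]
    _ = T z x y := by rw [hanti z y x, neg_neg]
    _ = T x z y := hsymm z x y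
    _ = -T x y z := hanti x z y

theorem LinearMap.eq_zero_of_skew_of_symm {E : Type*} [NormedAddCommGroup E]
    [InnerProductSpace ℝ E] (f : E →ₗ[ℝ] E →ₗ[ℝ] E)
    (hskew : ∀ v w u : E, ⟪f v w, u⟫ = -⟪w, f v u⟫) (hsym : ∀ v₁ v₂ : E, f v₁ v₂ = f v₂ v₁) :
    f = 0 := by
  have horth (x y z : E) : ⟪f x y, z⟫ = 0 :=
    eq_zero_of_symm_of_antisymm (fun x y z ↦ ⟪f x y, z⟫) (fun x y z ↦ by rw [hsym])
      (fun x y z ↦ by rw [hskew, real_inner_comm]) x y z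
  ext x y
  exact inner_self_eq_zero.mp (horth x y (f x y))

/-- The first algebraic prolongation of `so(n)` is zero: a linear map
`f : ℝⁿ → End(ℝⁿ)` taking values in skew-adjoint endomorphisms and symmetric in the
sense `f v₁ v₂ = f v₂ v₁` must vanish. -/
theorem first_prolongation_so_eq_zero (n : ℕ)
    (f : EuclideanSpace ℝ (Fin n) →ₗ[ℝ]
      (EuclideanSpace ℝ (Fin n) →ₗ[ℝ] EuclideanSpace ℝ (Fin n)))
    (hskew : ∀ v w u : EuclideanSpace ℝ (Fin n), ⟪f v w, u⟫ = -⟪w, f v u⟫)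
    (hsym : ∀ v₁ v₂ : EuclideanSpace ℝ (Fin n), f v₁ v₂ = f v₂ v₁) :
    f = 0 :=
  f.eq_zero_of_skew_of_symm hskew hsym
end

section
/- Let n be a natural number and let V = ℝⁿ with its standard inner product. Let so(V) denote the space of skew-adjoint endomorphisms of V. The Spencer operator ∂, which sends a linear map f : V → so(V) to the alternating bilinear map (v₁, v₂) ↦ f(v₁)(v₂) − f(v₂)(v₁), is a linear isomorphism from the space of linear maps Hom(V, so(V)) onto the space of alternating bilinear maps V × V → V. In particular, both spaces have dimension n²(n−1)/2. -/
open scoped RealInnerProductSpace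

/-- The skew-adjoint endomorphisms of Euclidean `ℝⁿ`, i.e. `so(n)`. -/
noncomputable def soSub (n : ℕ) :
    Submodule ℝ (EuclideanSpace ℝ (Fin n) →ₗ[ℝ] EuclideanSpace ℝ (Fin n)) where
  carrier := {A | ∀ w u : EuclideanSpace ℝ (Fin n), ⟪A w, u⟫ = -⟪w, A u⟫}
  add_mem' := by
    intro a b ha hb w u
    simp only [LinearMap.add_apply, inner_add_left, inner_add_right, ha w u, hb w u]
    ring
  zero_mem' := by
    intro w u
    simp
  smul_mem' := by
    intro c a ha w u
    simp only [LinearMap.smul_apply, real_inner_smul_left, real_inner_smul_right, ha w u]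
    ring

/-- The alternating bilinear maps `ℝⁿ × ℝⁿ → ℝⁿ`. -/
noncomputable def altSub (n : ℕ) :
    Submodule ℝ (EuclideanSpace ℝ (Fin n) →ₗ[ℝ]
      (EuclideanSpace ℝ (Fin n) →ₗ[ℝ] EuclideanSpace ℝ (Fin n))) where
  carrier := {B | ∀ v : EuclideanSpace ℝ (Fin n), B v v = 0}
  add_mem' := by
    intro a b ha hb v
    simp [ha v, hb v]
  zero_mem' := by
    intro v
    simp
  smul_mem' := by
    intro c a ha v
    simp [ha v]

namespace SpencerAux

variable {n : ℕ}
local notation "V" => EuclideanSpace ℝ (Fin n)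
local notation "E" => (EuclideanSpace ℝ (Fin n) →ₗ[ℝ] EuclideanSpace ℝ (Fin n))

/-- skew-pair generator `x ↦ ⟪w,x⟫v - ⟪v,x⟫w`. -/
noncomputable def sp (v w : V) : EuclideanSpace ℝ (Fin n) →ₗ[ℝ] EuclideanSpace ℝ (Fin n) where
  toFun x := ⟪w, x⟫ • v - ⟪v, x⟫ • w
  map_add' x y := by simp [inner_add_right, add_smul]; abel
  map_smul' c x := by simp [inner_smul_right, smul_smul, smul_sub]

lemma inner_sp (v w x y : V) : ⟪sp v w x, y⟫ = ⟪w, x⟫ * ⟪v, y⟫ - ⟪v, x⟫ * ⟪w, y⟫ := by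
  simp only [sp, LinearMap.coe_mk, AddHom.coe_mk, inner_sub_left, real_inner_smul_left]

lemma sp_mem (v w : V) : sp v w ∈ soSub n := by
  intro x y
  rw [inner_sp, real_inner_comm (sp v w y) x, inner_sp]
  ring

/-- alternating implies skew -/
lemma alt_skew (B : EuclideanSpace ℝ (Fin n) →ₗ[ℝ]
      (EuclideanSpace ℝ (Fin n) →ₗ[ℝ] EuclideanSpace ℝ (Fin n)))
    (hB : ∀ v : V, B v v = 0) (u v : V) : B u v = -B v u := by
  have h := hB (u + v)
  simp only [map_add, LinearMap.add_apply, hB u, hB v, zero_add, add_zero] at h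
  rw [eq_neg_iff_add_eq_zero, add_comm]
  exact h

/-- The Spencer operator -/
noncomputable def Dmap : (EuclideanSpace ℝ (Fin n) →ₗ[ℝ] soSub n) →ₗ[ℝ] altSub n where
  toFun f := ⟨(soSub n).subtype ∘ₗ f - ((soSub n).subtype ∘ₗ f).flip, by
    intro v
    simp⟩
  map_add' f g := by
    apply Subtype.ext
    refine LinearMap.ext fun u => LinearMap.ext fun v => ?_
    simp
    abel
  map_smul' c f := by
    apply Subtype.ext
    refine LinearMap.ext fun u => LinearMap.ext fun v => ?_
    simp [smul_sub]

lemma Dmap_apply (f : EuclideanSpace ℝ (Fin n) →ₗ[ℝ] soSub n) (u v : V) :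
    ((Dmap f : EuclideanSpace ℝ (Fin n) →ₗ[ℝ]
      (EuclideanSpace ℝ (Fin n) →ₗ[ℝ] EuclideanSpace ℝ (Fin n))) u) v
      = (f u : EuclideanSpace ℝ (Fin n) →ₗ[ℝ] EuclideanSpace ℝ (Fin n)) v
        - (f v : EuclideanSpace ℝ (Fin n) →ₗ[ℝ] EuclideanSpace ℝ (Fin n)) u := by
  simp [Dmap]

/-- the inverse, inner level -/
noncomputable def gA2 (B : EuclideanSpace ℝ (Fin n) →ₗ[ℝ]
      (EuclideanSpace ℝ (Fin n) →ₗ[ℝ] EuclideanSpace ℝ (Fin n))) (u : V) :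
    EuclideanSpace ℝ (Fin n) →ₗ[ℝ] EuclideanSpace ℝ (Fin n) where
  toFun v := (2⁻¹ : ℝ) • (B u v - LinearMap.adjoint (B v) u - LinearMap.adjoint (B u) v)
  map_add' v w := by
    simp only [map_add, LinearMap.add_apply, ← smul_add]
    congr 1
    abel
  map_smul' c v := by
    simp only [map_smul, LinearMap.smul_apply, RingHom.id_apply, smul_comm (2⁻¹ : ℝ) c,
      ← smul_sub]

lemma inner_gA2 (B : EuclideanSpace ℝ (Fin n) →ₗ[ℝ]
      (EuclideanSpace ℝ (Fin n) →ₗ[ℝ] EuclideanSpace ℝ (Fin n))) (u v w : V) :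
    ⟪gA2 B u v, w⟫ = 2⁻¹ * (⟪B u v, w⟫ - ⟪u, B v w⟫ - ⟪v, B u w⟫) := by
  simp only [gA2, LinearMap.coe_mk, AddHom.coe_mk, real_inner_smul_left, inner_sub_left,
    LinearMap.adjoint_inner_left]

lemma gA2_mem (B : EuclideanSpace ℝ (Fin n) →ₗ[ℝ]
      (EuclideanSpace ℝ (Fin n) →ₗ[ℝ] EuclideanSpace ℝ (Fin n)))
    (hB : ∀ v : V, B v v = 0) (u : V) : gA2 B u ∈ soSub n := by
  intro x y
  rw [inner_gA2, real_inner_comm (gA2 B u y) x, inner_gA2]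
  rw [alt_skew B hB y x]
  rw [real_inner_comm x (B u y), real_inner_comm y (B u x)]
  simp only [map_neg, LinearMap.neg_apply, inner_neg_right]
  ring

/-- inverse, as linear map into the hom space -/
noncomputable def gA (B : EuclideanSpace ℝ (Fin n) →ₗ[ℝ]
      (EuclideanSpace ℝ (Fin n) →ₗ[ℝ] EuclideanSpace ℝ (Fin n)))
    (hB : ∀ v : V, B v v = 0) : EuclideanSpace ℝ (Fin n) →ₗ[ℝ] soSub n where
  toFun u := ⟨gA2 B u, gA2_mem B hB u⟩
  map_add' u u' := by
    apply Subtype.ext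
    refine LinearMap.ext fun v => ?_
    apply ext_inner_right ℝ
    intro w
    simp only [Submodule.coe_add, LinearMap.add_apply, inner_add_left, inner_add_right,
      inner_gA2, map_add]
    ring
  map_smul' c u := by
    apply Subtype.ext
    refine LinearMap.ext fun v => ?_
    apply ext_inner_right ℝ
    intro w
    simp only [RingHom.id_apply, SetLike.val_smul, LinearMap.smul_apply, real_inner_smul_left,
      inner_gA2, map_smul, inner_smul_right]
    ring

noncomputable def Gmap : altSub n →ₗ[ℝ] (EuclideanSpace ℝ (Fin n) →ₗ[ℝ] soSub n) where
  toFun B := gA B.1 B.2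
  map_add' B C := by
    refine LinearMap.ext fun u => Subtype.ext (LinearMap.ext fun v => ?_)
    apply ext_inner_right ℝ
    intro w
    simp only [gA, LinearMap.coe_mk, AddHom.coe_mk, LinearMap.add_apply, Submodule.coe_add,
      inner_add_left, inner_gA2, LinearMap.add_apply, inner_add_right]
    ring
  map_smul' c B := by
    refine LinearMap.ext fun u => Subtype.ext (LinearMap.ext fun v => ?_)
    apply ext_inner_right ℝ
    intro w
    simp only [gA, LinearMap.coe_mk, AddHom.coe_mk, RingHom.id_apply, LinearMap.smul_apply,
      SetLike.val_smul, real_inner_smul_left, inner_gA2, inner_smul_right]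
    ring

lemma DG : (Dmap (n := n)).comp Gmap = LinearMap.id := by
  refine LinearMap.ext fun B => Subtype.ext (LinearMap.ext fun u => LinearMap.ext fun v => ?_)
  apply ext_inner_right ℝ
  intro w
  have hB := B.2
  simp only [LinearMap.comp_apply, LinearMap.id_apply]
  rw [Dmap_apply]
  show ⟪gA2 B.1 u v - gA2 B.1 v u, w⟫ = _
  rw [inner_sub_left, inner_gA2, inner_gA2, alt_skew B.1 hB v u]
  simp only [inner_neg_left]
  ring

lemma GD : (Gmap (n := n)).comp Dmap = LinearMap.id := by
  refine LinearMap.ext fun f => LinearMap.ext fun u => Subtype.ext (LinearMap.ext fun v => ?_)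
  apply ext_inner_right ℝ
  intro w
  have hf : ∀ x y z : V, ⟪(f x : EuclideanSpace ℝ (Fin n) →ₗ[ℝ] EuclideanSpace ℝ (Fin n)) y, z⟫
      = -⟪y, (f x : EuclideanSpace ℝ (Fin n) →ₗ[ℝ] EuclideanSpace ℝ (Fin n)) z⟫ :=
    fun x y z => (f x).2 y z
  simp only [LinearMap.comp_apply, LinearMap.id_apply]
  show ⟪gA2 ((Dmap f : _)) u v, w⟫ = _
  rw [inner_gA2]
  rw [Dmap_apply, Dmap_apply, Dmap_apply]
  rw [inner_sub_left, inner_sub_right, inner_sub_right]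
  have h1 : ⟪u, (f v : EuclideanSpace ℝ (Fin n) →ₗ[ℝ] EuclideanSpace ℝ (Fin n)) w⟫
      = -⟪(f v : EuclideanSpace ℝ (Fin n) →ₗ[ℝ] EuclideanSpace ℝ (Fin n)) u, w⟫ := by
    rw [hf v u w, neg_neg]
  have h2 : ⟪u, (f w : EuclideanSpace ℝ (Fin n) →ₗ[ℝ] EuclideanSpace ℝ (Fin n)) v⟫
      = -⟪(f w : EuclideanSpace ℝ (Fin n) →ₗ[ℝ] EuclideanSpace ℝ (Fin n)) u, v⟫ := by
    rw [hf w u v, neg_neg]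
  have h3 : ⟪v, (f u : EuclideanSpace ℝ (Fin n) →ₗ[ℝ] EuclideanSpace ℝ (Fin n)) w⟫
      = -⟪(f u : EuclideanSpace ℝ (Fin n) →ₗ[ℝ] EuclideanSpace ℝ (Fin n)) v, w⟫ := by
    rw [hf u v w, neg_neg]
  have h4 : ⟪v, (f w : EuclideanSpace ℝ (Fin n) →ₗ[ℝ] EuclideanSpace ℝ (Fin n)) u⟫
      = ⟪(f w : EuclideanSpace ℝ (Fin n) →ₗ[ℝ] EuclideanSpace ℝ (Fin n)) u, v⟫ := by
    exact real_inner_comm _ _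
  rw [h1, h2, h3, h4]
  ring

/-- The Spencer linear equivalence. -/
noncomputable def spencerEquiv :
    (EuclideanSpace ℝ (Fin n) →ₗ[ℝ] soSub n) ≃ₗ[ℝ] altSub n :=
  LinearEquiv.ofLinear Dmap Gmap DG GD

/-! dimension count -/

def Idx (n : ℕ) := {p : Fin n × Fin n // p.1 < p.2}

instance : Fintype (Idx n) := by unfold Idx; infer_instance
instance : DecidableEq (Idx n) := by unfold Idx; infer_instance

def idxEquiv : Idx n ≃ Σ i : Fin n, Fin i where
  toFun p := ⟨p.1.2, ⟨p.1.1, p.2⟩⟩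
  invFun x := ⟨(⟨x.2.1, x.2.2.trans x.1.2⟩, x.1), by simpa [Fin.lt_def] using x.2.2⟩
  left_inv := by rintro ⟨⟨⟨i, hi⟩, ⟨j, hj⟩⟩, h⟩; rfl
  right_inv := by rintro ⟨⟨i, hi⟩, ⟨j, hj⟩⟩; rfl

lemma card_idx : Fintype.card (Idx n) = n * (n - 1) / 2 := by
  rw [Fintype.card_congr idxEquiv, Fintype.card_sigma]
  simp only [Fintype.card_fin]
  rw [Fin.sum_univ_eq_sum_range (fun i => i) n]
  exact Finset.sum_range_id n

lemma inner_single_single (i j : Fin n) :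
    ⟪(EuclideanSpace.single i 1 : EuclideanSpace ℝ (Fin n)), EuclideanSpace.single j 1⟫
      = if i = j then (1 : ℝ) else 0 := by
  simp [EuclideanSpace.inner_single_left, EuclideanSpace.single_apply, eq_comm]

noncomputable def Phi : soSub n →ₗ[ℝ] (Idx n → ℝ) where
  toFun A p := ⟪(A : EuclideanSpace ℝ (Fin n) →ₗ[ℝ] EuclideanSpace ℝ (Fin n))
      (EuclideanSpace.single p.1.1 1), EuclideanSpace.single p.1.2 1⟫
  map_add' A B := by
    funext p
    simp [inner_add_left]
  map_smul' c A := by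
    funext p
    simp [real_inner_smul_left]

lemma Phi_inj : Function.Injective (Phi (n := n)) := by
  rw [← LinearMap.ker_eq_bot, LinearMap.ker_eq_bot']
  intro A hA
  have key : ∀ i j : Fin n,
      ⟪(A : EuclideanSpace ℝ (Fin n) →ₗ[ℝ] EuclideanSpace ℝ (Fin n))
        (EuclideanSpace.single i 1), EuclideanSpace.single j 1⟫ = 0 := by
    intro i j
    rcases lt_trichotomy i j with h | h | h
    · exact congrFun hA ⟨(i, j), h⟩
    · subst h
      have hs := A.2 (EuclideanSpace.single i 1) (EuclideanSpace.single i 1)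
      have hc := real_inner_comm (EuclideanSpace.single i 1)
        ((A : EuclideanSpace ℝ (Fin n) →ₗ[ℝ] EuclideanSpace ℝ (Fin n))
          (EuclideanSpace.single i 1))
      linarith
    · have h0 : ⟪(A : EuclideanSpace ℝ (Fin n) →ₗ[ℝ] EuclideanSpace ℝ (Fin n))
          (EuclideanSpace.single j 1), EuclideanSpace.single i 1⟫ = (0 : ℝ) :=
        congrFun hA ⟨(j, i), h⟩
      have hs := A.2 (EuclideanSpace.single i 1) (EuclideanSpace.single j 1)
      rw [hs, real_inner_comm, h0, neg_zero]
  apply Subtype.ext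
  apply Module.Basis.ext (EuclideanSpace.basisFun (Fin n) ℝ).toBasis
  intro i
  simp only [OrthonormalBasis.coe_toBasis, EuclideanSpace.basisFun_apply, LinearMap.zero_apply]
  ext j
  have hk := key i j
  rw [EuclideanSpace.inner_single_right] at hk
  simpa using hk

lemma Phi_surj : Function.Surjective (Phi (n := n)) := by
  intro c
  refine ⟨∑ p : Idx n, (-(c p)) • (⟨sp (EuclideanSpace.single p.1.1 1)
    (EuclideanSpace.single p.1.2 1), sp_mem _ _⟩ : soSub n), ?_⟩
  funext q
  rw [map_sum, Finset.sum_apply]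
  have hterm : ∀ p : Idx n, Phi ((-(c p)) • (⟨sp (EuclideanSpace.single p.1.1 1)
      (EuclideanSpace.single p.1.2 1), sp_mem _ _⟩ : soSub n)) q
      = if p = q then c p else 0 := by
    intro p
    rw [map_smul]
    simp only [Pi.smul_apply, smul_eq_mul]
    show -c p * ⟪sp (EuclideanSpace.single p.1.1 1) (EuclideanSpace.single p.1.2 1)
      (EuclideanSpace.single q.1.1 1), EuclideanSpace.single q.1.2 1⟫ = _
    rw [inner_sp, inner_single_single, inner_single_single, inner_single_single,
      inner_single_single]
    by_cases hpq : p = q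
    · subst hpq
      rw [if_neg p.2.ne', if_neg p.2.ne, if_pos rfl, if_pos rfl, if_pos rfl]
      ring
    · rw [if_neg hpq]
      by_cases h1 : p.1.2 = q.1.1 <;> by_cases h2 : p.1.1 = q.1.2 <;>
        by_cases h3 : p.1.1 = q.1.1 <;> by_cases h4 : p.1.2 = q.1.2 <;>
        first
          | (exact absurd (Subtype.ext (Prod.ext h3 h4)) hpq)
          | (exfalso
             have hp := p.2; have hq := q.2
             rw [Fin.lt_def] at hp hq
             have e1 := congrArg Fin.val h1
             have e2 := congrArg Fin.val h2
             omega)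
          | (simp [h1, h2, h3, h4] <;> ring)
  rw [Finset.sum_congr rfl fun p _ => hterm p]
  simp [Finset.sum_ite_eq]

lemma finrank_soSub : Module.finrank ℝ (soSub n) = n * (n - 1) / 2 := by
  have e := LinearEquiv.ofBijective (Phi (n := n)) ⟨Phi_inj, Phi_surj⟩
  rw [e.finrank_eq, Module.finrank_pi, card_idx]

lemma finrank_hom :
    Module.finrank ℝ (EuclideanSpace ℝ (Fin n) →ₗ[ℝ] soSub n) = n ^ 2 * (n - 1) / 2 := by
  rw [Module.finrank_linearMap, finrank_euclideanSpace_fin, finrank_soSub]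
  have hd : 2 ∣ n * (n - 1) := by
    rcases n with _ | m
    · simp
    · simpa [Nat.succ_sub_one, mul_comm] using (Nat.even_mul_succ_self m).two_dvd
  rw [← Nat.mul_div_assoc n hd]
  congr 1
  ring

end SpencerAux

/-- The Spencer operator `∂f(v₁,v₂) = f(v₁)v₂ - f(v₂)v₁` is a linear isomorphism from
`Hom(ℝⁿ, so(n))` onto the alternating bilinear maps `ℝⁿ × ℝⁿ → ℝⁿ`; in particular both
spaces have dimension `n²(n-1)/2`. -/
theorem spencer_operator_so_bijective (n : ℕ) :
    (∃ e : (EuclideanSpace ℝ (Fin n) →ₗ[ℝ] soSub n) ≃ₗ[ℝ] altSub n,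
      ∀ (f : EuclideanSpace ℝ (Fin n) →ₗ[ℝ] soSub n) (v₁ v₂ : EuclideanSpace ℝ (Fin n)),
        ((e f : EuclideanSpace ℝ (Fin n) →ₗ[ℝ]
            (EuclideanSpace ℝ (Fin n) →ₗ[ℝ] EuclideanSpace ℝ (Fin n))) v₁) v₂ =
          ((f v₁ : EuclideanSpace ℝ (Fin n) →ₗ[ℝ] EuclideanSpace ℝ (Fin n)) v₂)
            - ((f v₂ : EuclideanSpace ℝ (Fin n) →ₗ[ℝ] EuclideanSpace ℝ (Fin n)) v₁))
    ∧ Module.finrank ℝ (EuclideanSpace ℝ (Fin n) →ₗ[ℝ] soSub n) = n ^ 2 * (n - 1) / 2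
    ∧ Module.finrank ℝ (altSub n) = n ^ 2 * (n - 1) / 2 := by
  refine ⟨⟨SpencerAux.spencerEquiv (n := n), fun f v₁ v₂ => ?_⟩, SpencerAux.finrank_hom, ?_⟩
  · have : SpencerAux.spencerEquiv (n := n) f = SpencerAux.Dmap f := rfl
    rw [this]
    exact SpencerAux.Dmap_apply f v₁ v₂
  · exact ((SpencerAux.spencerEquiv (n := n)).symm.finrank_eq).trans SpencerAux.finrank_hom
end

section
/- Let L be a Lie algebra over a field K equipped with a ℤ-grading: a family of K-submodules (gᵢ)_{i∈ℤ} such that L is the internal direct sum of the gᵢ and ⁅gᵢ, gⱼ⁆ ⊆ g_{i+j} for all i, j. Assume the grading is transitive in nonnegative degrees: for every i ≥ 0 and every X ∈ gᵢ, if ⁅X, v⁆ = 0 for all v ∈ g₋₁, then X = 0. If g_k = 0 for some k ≥ 0, then g_l = 0 for all l ≥ k. -/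
theorem component_succ_eq_bot_of_eq_bot
    {K L : Type*} [CommRing K] [LieRing L] [LieAlgebra K L] (g : ℤ → Submodule K L) {n : ℤ}
    (hbr : ∀ x ∈ g (n + 1), ∀ y ∈ g (-1), ⁅x, y⁆ ∈ g n)
    (htrans : ∀ X ∈ g (n + 1), (∀ v ∈ g (-1), ⁅X, v⁆ = 0) → X = 0)
    (hgn : g n = ⊥) : g (n + 1) = ⊥ := by
  rw [Submodule.eq_bot_iff]
  intro X hX
  refine htrans X hX fun v hv => ?_
  simpa [hgn] using hbr X hX v hv

theorem graded_component_eq_bot_of_le_general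
    {K L : Type*} [Field K] [LieRing L] [LieAlgebra K L]
    (g : ℤ → Submodule K L)
    (hbr : ∀ i j : ℤ, ∀ x ∈ g i, ∀ y ∈ g j, ⁅x, y⁆ ∈ g (i + j))
    (htrans : ∀ i : ℤ, 0 ≤ i → ∀ X ∈ g i, (∀ v ∈ g (-1), ⁅X, v⁆ = 0) → X = 0)
    (k : ℤ) (hk : 0 ≤ k) (hgk : g k = ⊥) :
    ∀ l : ℤ, k ≤ l → g l = ⊥ := by
  refine Int.leInduction hgk fun n hkn ih => component_succ_eq_bot_of_eq_bot g ?_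
    (htrans (n + 1) (by omega)) ih
  intro x hx y hy
  simpa using hbr (n + 1) (-1) x hx y hy

/-- In a ℤ-graded Lie algebra which is transitive in nonnegative degrees
(nonzero elements of nonnegative degree act nontrivially on `g₋₁`), if one
grading component of nonnegative degree vanishes then so do all higher ones. -/
theorem graded_component_eq_bot_of_le
    {K L : Type*} [Field K] [LieRing L] [LieAlgebra K L]
    (g : ℤ → Submodule K L)
    (hinternal : DirectSum.IsInternal g)
    (hbr : ∀ i j : ℤ, ∀ x ∈ g i, ∀ y ∈ g j, ⁅x, y⁆ ∈ g (i + j))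
    (htrans : ∀ i : ℤ, 0 ≤ i → ∀ X ∈ g i, (∀ v ∈ g (-1), ⁅X, v⁆ = 0) → X = 0)
    (k : ℤ) (hk : 0 ≤ k) (hgk : g k = ⊥) :
    ∀ l : ℤ, k ≤ l → g l = ⊥ :=
  graded_component_eq_bot_of_le_general g hbr htrans k hk hgk
end
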